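/- arXiv:1404.6984 — 3 statements merged into one kernel-verified Lean document; each statement's English description precedes it below -/
import Mathlib

section
/- Let $a_1, a_2 > 0$ with $a_1 + a_2 \leq 1$, and let $f : [0,\infty) \to \mathbb{R}$ be defined implicitly by $2^{-2t} = a_1 2^{-2 f(t)} + a_2$ (for $t$ such that $2^{-2t} > a_2$, i.e., $t < \frac{1}{2}\log_2(1/a_2)$). Then for $\lambda \geq 0$, $$\inf_{t \geq 0} \left( \max\{f(t),0\} - \lambda t \right) = \begin{cases} \frac{1}{2}\log_2\frac{a_1(\lambda-1)}{a_2} - \frac{\lambda}{2}\log_2\frac{\lambda-1}{a_2\lambda}, & \lambda \geq \frac{a_1+a_2}{a_1},\\ -\frac{\lambda}{2}\log_2\frac{1}{a_1+a_2}, & 0 \leq \lambda \leq \frac{a_1+a_2}{a_1}. \end{cases}$$ -/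
open MeasureTheory ProbabilityTheory Real Filter Topology

/-!
With `x = 2^(-2t)` and `u = 2^(-2 f t)` the relation reads `x = a1 u + a2`, and `t`, `f t` are
`-½ log₂` of `x`, `u`. For `λ ≥ (a1 + a2)/a1` the lower bound is Bernoulli's inequality
`1 + p (y - 1) ≤ y ^ p` (`p ≥ 1`) at `y = x (λ - 1)/(a2 λ)`, whose tangent line is exactly
`a1 (λ - 1) u / a2`; equality holds at `t = ½ log₂ ((λ - 1)/(a2 λ))`, where `f' = λ`.
For smaller `λ` the minimum sits at the kink of `max (f t) 0`, the zero `½ log₂ (1/(a1 + a2))` of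
`f`: to its left `t` is smaller, to its right Bernoulli with exponent `max λ 1 ≤ (a1 + a2)/a1`
applies at `y = x/(a1 + a2)`.
-/

lemma one_add_mul_sub_one_le_rpow {y p : ℝ} (hy : 0 ≤ y) (hp : 1 ≤ p) :
    1 + p * (y - 1) ≤ y ^ p := by
  simpa using one_add_mul_self_le_rpow_one_add (s := y - 1) (by linarith) hp

lemma one_add_mul_sub_one_le_rpow_of_le_one {y p q : ℝ} (hy0 : 0 < y) (hy1 : y ≤ 1)
    (hpq : p ≤ q) (hq : 1 ≤ q) : 1 + q * (y - 1) ≤ y ^ p :=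
  calc 1 + q * (y - 1) ≤ 1 + max p 1 * (y - 1) := by nlinarith [max_le hpq hq]
    _ ≤ y ^ max p 1 := one_add_mul_sub_one_le_rpow hy0.le (le_max_right p 1)
    _ ≤ y ^ p := rpow_le_rpow_of_exponent_ge hy0 hy1 (le_max_left p 1)

lemma two_rpow_neg_two_mul_eq_inv_iff {s u : ℝ} (hu : 0 < u) :
    (2:ℝ) ^ (-2 * s) = u⁻¹ ↔ s = 1/2 * logb 2 u := by
  constructor
  · intro h
    have h' := congrArg (logb 2) h
    rw [logb_rpow two_pos (by norm_num), logb_inv] at h'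
    linarith
  · rintro rfl
    rw [show -2 * (1/2 * logb 2 u) = logb 2 u⁻¹ by rw [logb_inv]; ring,
      rpow_logb two_pos (by norm_num) (inv_pos.2 hu)]

section LowerBounds

variable {a1 a2 s t lam : ℝ}

lemma half_logb_sub_le_of_two_rpow_eq (h1 : 0 < a1) (h2 : 0 < a2) (hlam : 1 < lam)
    (hrel : (2:ℝ) ^ (-2*t) = a1 * (2:ℝ) ^ (-2 * s) + a2) :
    (1/2) * logb 2 (a1*(lam-1)/a2) - (lam/2) * logb 2 ((lam-1)/(a2*lam)) ≤ s - lam * t := by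
  set u := (2:ℝ) ^ (-2 * s)
  set c := (lam-1)/(a2*lam)
  have hu : 0 < u := by positivity
  have hc : 0 < c := div_pos (by linarith) (by positivity)
  have hx : 0 < a1 * u + a2 := by positivity
  have hlogu : logb 2 u = -2 * s := logb_rpow two_pos (by norm_num)
  have hlogx : logb 2 (a1 * u + a2) = -2 * t := by
    rw [← hrel]; exact logb_rpow two_pos (by norm_num)
  have hbern : a1*(lam-1)/a2 * u ≤ ((a1 * u + a2) * c) ^ lam :=
    calc a1*(lam-1)/a2 * u = 1 + lam * ((a1 * u + a2) * c - 1) := by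
          simp only [c]; field_simp; ring
      _ ≤ _ := one_add_mul_sub_one_le_rpow (by positivity) hlam.le
  have hlog := logb_le_logb_of_le one_lt_two (by positivity) hbern
  rw [logb_rpow_eq_mul_logb_of_pos (by positivity), logb_mul (by positivity) hu.ne',
    logb_mul hx.ne' hc.ne', hlogu, hlogx] at hlog
  linarith

lemma neg_mul_half_logb_le_max_sub_mul (h1 : 0 < a1) (h2 : 0 < a2) (hlam : 0 ≤ lam)
    (hlam' : lam ≤ (a1 + a2)/a1) (hrel : (2:ℝ) ^ (-2*t) = a1 * (2:ℝ) ^ (-2 * s) + a2) :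
    -(lam/2) * logb 2 (1/(a1+a2)) ≤ max s 0 - lam * t := by
  set u := (2:ℝ) ^ (-2 * s)
  set y := (a1 * u + a2) / (a1 + a2)
  have hu : 0 < u := by positivity
  have hy : 0 < y := by positivity
  have hlogu : logb 2 u = -2 * s := logb_rpow two_pos (by norm_num)
  have hlogy : logb 2 y = -2 * t - logb 2 (a1 + a2) := by
    rw [logb_div (by positivity) (by positivity), ← hrel, logb_rpow two_pos (by norm_num)]
  rw [one_div, logb_inv]
  rcases le_total s 0 with hs | hs
  · have hu1 : 1 ≤ u := one_le_rpow one_le_two (by linarith)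
    have hy1 : 0 ≤ logb 2 y := logb_nonneg one_lt_two (by rw [le_div_iff₀ (by positivity)]; nlinarith)
    rw [max_eq_right hs]
    nlinarith
  · have hu1 : u ≤ 1 := rpow_le_one_of_one_le_of_nonpos one_le_two (by linarith)
    have hy1 : y ≤ 1 := by rw [div_le_one (by positivity)]; nlinarith
    have hkey : u ≤ y ^ lam :=
      calc u = 1 + (a1 + a2)/a1 * (y - 1) := by simp only [y]; field_simp; ring
        _ ≤ y ^ lam := one_add_mul_sub_one_le_rpow_of_le_one hy hy1 hlam'
          (by rw [le_div_iff₀ h1]; linarith)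
    have hlog := logb_le_logb_of_le one_lt_two hu hkey
    rw [logb_rpow_eq_mul_logb_of_pos hy, hlogu, hlogy] at hlog
    rw [max_eq_left hs]
    nlinarith

end LowerBounds

lemma half_logb_mem_Ico_and_apply_eq {a1 a2 c : ℝ} {f : ℝ → ℝ} (h1 : 0 < a1)
    (hf : ∀ t, 0 ≤ t → t < (1/2) * logb 2 (1/a2) →
      (2:ℝ) ^ (-2*t) = a1 * (2:ℝ) ^ (-2 * f t) + a2)
    (hc : 1 ≤ c) (hca : c < 1/a2) :
    1/2 * logb 2 c ∈ Set.Ico 0 ((1/2) * logb 2 (1/a2)) ∧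
      f (1/2 * logb 2 c) = 1/2 * logb 2 (a1 / (c⁻¹ - a2)) := by
  have hc0 : 0 < c := by linarith
  have h2 : 0 < a2 := one_div_pos.1 (by linarith)
  have ht0 : 0 ≤ 1/2 * logb 2 c := mul_nonneg (by norm_num) (logb_nonneg one_lt_two hc)
  have htT : 1/2 * logb 2 c < (1/2) * logb 2 (1/a2) :=
    mul_lt_mul_of_pos_left (logb_lt_logb one_lt_two hc0 hca) (by norm_num)
  refine ⟨⟨ht0, htT⟩, (two_rpow_neg_two_mul_eq_inv_iff ?_).1 ?_⟩
  · have : a2 < c⁻¹ := by rwa [lt_inv_comm₀ h2 hc0, ← one_div]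
    exact div_pos h1 (by linarith)
  · have hrel := hf _ ht0 htT
    rw [(two_rpow_neg_two_mul_eq_inv_iff hc0).2 rfl] at hrel
    rw [inv_div, eq_div_iff h1.ne']
    linarith

theorem stmt2 (a1 a2 : ℝ) (h1 : 0 < a1) (h2 : 0 < a2) (h12 : a1 + a2 ≤ 1)
    (f : ℝ → ℝ)
    (hf : ∀ t, 0 ≤ t → t < (1/2) * Real.logb 2 (1/a2) →
      (2:ℝ) ^ (-2*t) = a1 * (2:ℝ) ^ (-2 * f t) + a2)
    (lam : ℝ) (hlam : 0 ≤ lam) :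
    sInf {y : ℝ | ∃ t, 0 ≤ t ∧ t < (1/2) * Real.logb 2 (1/a2) ∧
        y = max (f t) 0 - lam * t} =
      if (a1 + a2)/a1 ≤ lam then
        (1/2) * Real.logb 2 (a1*(lam-1)/a2) - (lam/2) * Real.logb 2 ((lam-1)/(a2*lam))
      else -(lam/2) * Real.logb 2 (1/(a1+a2)) := by
  refine IsLeast.csInf_eq ?_
  split_ifs with hcase
  · have hAL : a1 + a2 ≤ a1 * lam := by rwa [div_le_iff₀ h1, mul_comm] at hcase
    have hlam1 : 1 < lam := by nlinarith
    have hc : 1 ≤ (lam-1)/(a2*lam) := by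
      rw [le_div_iff₀ (by positivity)]
      nlinarith [mul_le_mul_of_nonneg_right hAL (by linarith : (0:ℝ) ≤ 1 - a2)]
    have hca : (lam-1)/(a2*lam) < 1/a2 := by
      rw [div_lt_div_iff₀ (by positivity) h2]; nlinarith
    obtain ⟨⟨ht0, htT⟩, hft⟩ := half_logb_mem_Ico_and_apply_eq h1 hf hc hca
    rw [show a1 / (((lam-1)/(a2*lam))⁻¹ - a2) = a1*(lam-1)/a2 by
      field_simp [show lam - 1 ≠ 0 by linarith]; ring] at hft
    have hft0 : 0 ≤ f (1/2 * logb 2 ((lam-1)/(a2*lam))) := hft ▸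
      mul_nonneg (by norm_num) (logb_nonneg one_lt_two (by rw [le_div_iff₀ h2]; linarith))
    refine ⟨⟨_, ht0, htT, by rw [max_eq_left hft0, hft]; ring⟩, ?_⟩
    rintro _ ⟨t, ht0, htT, rfl⟩
    linarith [half_logb_sub_le_of_two_rpow_eq h1 h2 hlam1 (hf t ht0 htT), le_max_left (f t) 0]
  · have hc : 1 ≤ 1/(a1+a2) := by rw [le_div_iff₀ (by positivity)]; linarith
    have hca : 1/(a1+a2) < 1/a2 := one_div_lt_one_div_of_lt h2 (by linarith)
    obtain ⟨⟨ht0, htT⟩, hft⟩ := half_logb_mem_Ico_and_apply_eq h1 hf hc hca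
    rw [show a1 / ((1/(a1+a2))⁻¹ - a2) = 1 by
      rw [one_div, inv_inv, add_sub_cancel_right, div_self h1.ne'], logb_one, mul_zero] at hft
    refine ⟨⟨_, ht0, htT, by rw [hft, max_self]; ring⟩, ?_⟩
    rintro _ ⟨t, ht0, htT, rfl⟩
    exact neg_mul_half_logb_le_max_sub_mul h1 h2 hlam (not_le.1 hcase).le (hf t ht0 htT)
end

section
/- Let $a_1, a_2 > 0$ with $a_1 + a_2 \le 1$, and suppose a nonnegative real number $u$ and real number $t \ge 0$ satisfy $2^{-2t} \geq a_1 2^{-2u} + a_2$. Then for every $\lambda \geq \frac{a_1+a_2}{a_1}$, $$u - \lambda t \geq \frac{1}{2}\log_2\frac{a_1(\lambda-1)}{a_2} - \frac{\lambda}{2}\log_2\frac{\lambda-1}{a_2\lambda}.$$ -/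
/-!
Writing `x = 2^(-2u)`, the hypothesis gives `-2t ≥ log₂ (a₁ x + a₂)`, so it suffices to bound
`λ log (a₁ x + a₂) - log x` from below uniformly in `x > 0`. Splitting
`a₁ x + a₂ = (1/λ) (λ a₁ x) + ((λ-1)/λ) (λ a₂/(λ-1))` and using the concavity of `log` gives
exactly the stated bound, with equality at `x = a₂ / (a₁ (λ-1))`.
-/

open Real

lemma log_div_sub_mul_log_div_le {a₁ a₂ x lam : ℝ} (ha₁ : 0 < a₁) (ha₂ : 0 < a₂) (hx : 0 < x)
    (hlam : 1 < lam) :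
    log (a₁ * (lam - 1) / a₂) - lam * log ((lam - 1) / (a₂ * lam)) ≤
      lam * log (a₁ * x + a₂) - log x := by
  have hlam₀ : 0 < lam := by linarith
  have hlam₁ : 0 < lam - 1 := by linarith
  set p := lam * a₁ * x
  set q := lam * a₂ / (lam - 1)
  have hp : 0 < p := by positivity
  have hq : 0 < q := by positivity
  have hsplit : (1 / lam) * p + ((lam - 1) / lam) * q = a₁ * x + a₂ := by
    simp only [p, q]
    field_simp
  have hconcave : (1 / lam) * log p + ((lam - 1) / lam) * log q ≤ log (a₁ * x + a₂) := by
    simpa only [smul_eq_mul, hsplit] using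
      strictConcaveOn_log_Ioi.concaveOn.2 (Set.mem_Ioi.2 hp) (Set.mem_Ioi.2 hq)
        (by positivity : 0 ≤ 1 / lam) (by positivity : 0 ≤ (lam - 1) / lam) (by field_simp; ring)
  have hscaled : log p + (lam - 1) * log q ≤ lam * log (a₁ * x + a₂) :=
    calc log p + (lam - 1) * log q
        = lam * ((1 / lam) * log p + ((lam - 1) / lam) * log q) := by field_simp
      _ ≤ lam * log (a₁ * x + a₂) := mul_le_mul_of_nonneg_left hconcave hlam₀.le
  have h₁ : a₁ * (lam - 1) / a₂ = p / x / q := by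
    simp only [p, q]
    field_simp
  have h₂ : (lam - 1) / (a₂ * lam) = q⁻¹ := by
    simp only [q]
    rw [inv_div, mul_comm]
  rw [h₁, h₂, log_div (by positivity) hq.ne', log_div hp.ne' hx.ne', log_inv]
  linarith

lemma logb_div_sub_mul_logb_div_le {b a₁ a₂ x lam : ℝ} (hb : 1 ≤ b) (ha₁ : 0 < a₁)
    (ha₂ : 0 < a₂) (hx : 0 < x) (hlam : 1 < lam) :
    logb b (a₁ * (lam - 1) / a₂) - lam * logb b ((lam - 1) / (a₂ * lam)) ≤
      lam * logb b (a₁ * x + a₂) - logb b x := by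
  simp only [logb, ← mul_div_assoc, div_sub_div_same]
  exact div_le_div_of_nonneg_right (log_div_sub_mul_log_div_le ha₁ ha₂ hx hlam) (log_nonneg hb)

theorem stmt3_general (a1 a2 : ℝ) (h1 : 0 < a1) (h2 : 0 < a2)
    (u t : ℝ)
    (h : (2:ℝ) ^ (-2*t) ≥ a1 * (2:ℝ) ^ (-2*u) + a2)
    (lam : ℝ) (hlam : (a1+a2)/a1 ≤ lam) :
    u - lam * t ≥
      (1/2) * Real.logb 2 (a1*(lam-1)/a2)
        - (lam/2) * Real.logb 2 ((lam-1)/(a2*lam)) := by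
  have hlam₁ : 1 < lam := lt_of_lt_of_le ((lt_div_iff₀ h1).2 (by linarith)) hlam
  have hx : (0:ℝ) < 2 ^ (-2*u) := by positivity
  have hbound := logb_div_sub_mul_logb_div_le one_le_two h1 h2 hx hlam₁
  have hmono : logb 2 (a1 * 2 ^ (-2*u) + a2) ≤ -2 * t := by
    simpa only [logb_rpow two_pos one_lt_two.ne'] using logb_le_logb_of_le one_lt_two
      (by positivity) h
  rw [logb_rpow two_pos one_lt_two.ne'] at hbound
  linarith [mul_le_mul_of_nonneg_left hmono (by linarith : (0:ℝ) ≤ lam)]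

theorem stmt3 (a1 a2 : ℝ) (h1 : 0 < a1) (h2 : 0 < a2) (h12 : a1 + a2 ≤ 1)
    (u t : ℝ) (hu : 0 ≤ u) (ht : 0 ≤ t)
    (h : (2:ℝ) ^ (-2*t) ≥ a1 * (2:ℝ) ^ (-2*u) + a2)
    (lam : ℝ) (hlam : (a1+a2)/a1 ≤ lam) :
    u - lam * t ≥
      (1/2) * Real.logb 2 (a1*(lam-1)/a2)
        - (lam/2) * Real.logb 2 ((lam-1)/(a2*lam)) :=
  stmt3_general a1 a2 h1 h2 u t h lam hlam
end

section
/- Let $\Sigma_X, \Sigma_Z$ be $n \times n$ positive definite matrices and $\lambda \geq 1 + |\Sigma_X^{-1}\Sigma_Z|^{1/n}$. Suppose nonnegative reals $u, t$ satisfy $2^{-2t/n} \geq \frac{|\Sigma_X|^{1/n}}{|\Sigma_X+\Sigma_Z|^{1/n}} 2^{-2u/n} + \frac{|\Sigma_Z|^{1/n}}{|\Sigma_X+\Sigma_Z|^{1/n}}$. Then $$u - \lambda t \geq \frac{n}{2}\left[\log_2\frac{|\Sigma_X|^{1/n}(\lambda-1)}{|\Sigma_Z|^{1/n}} - \lambda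 \log_2 \frac{|\Sigma_X+\Sigma_Z|^{1/n}(\lambda-1)}{|\Sigma_Z|^{1/n}\lambda}\right].$$ Moreover, the hypothesis $a_1 + a_2 \leq 1$ needed for this bound, with $a_1 = \frac{|\Sigma_X|^{1/n}}{|\Sigma_X+\Sigma_Z|^{1/n}}$ and $a_2 = \frac{|\Sigma_Z|^{1/n}}{|\Sigma_X+\Sigma_Z|^{1/n}}$, holds by the Minkowski determinant inequality $|\Sigma_X|^{1/n} + |\Sigma_Z|^{1/n} \leq |\Sigma_X+\Sigma_Z|^{1/n}$. -/
/-!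
Minkowski's inequality: with `C = A ^ (1/2)` and `M = C⁻¹ B C⁻¹ ⪰ 0` we have `A + B = C (1 + M) C`,
so it reduces to `1 + (∏ μᵢ) ^ (1/n) ≤ (∏ (1 + μᵢ)) ^ (1/n)` for the eigenvalues `μᵢ ≥ 0` of `M`,
which is AM-GM applied to the proportions `1 / (1 + μᵢ)` and `μᵢ / (1 + μᵢ)`.

The bound: with `x = 2 ^ (-2u/n)` the hypothesis reads `t ≤ -(n/2) log₂ (a₁ x + a₂)`, so
`u - λ t ≥ (n/2) (λ log₂ (a₁ x + a₂) - log₂ x)`. The right side is minimal at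
`x = a₂ / (a₁ (λ - 1))`, and comparing with the minimum is the concavity inequality
`log r ≤ λ log (r / λ + (1 - 1/λ))` at `r = x a₁ (λ - 1) / a₂`.
-/

open Real Matrix

theorem log_le_mul_log_add_sub_one_div {r lam : ℝ} (hr : 0 < r) (hlam : 1 ≤ lam) :
    log r ≤ lam * log ((r + lam - 1) / lam) := by
  have hlam0 : 0 < lam := by linarith
  have hconc := strictConcaveOn_log_Ioi.concaveOn.2 (Set.mem_Ioi.2 hr) (Set.mem_Ioi.2 one_pos)
    (inv_nonneg.2 hlam0.le) (sub_nonneg.2 (inv_le_one_of_one_le₀ hlam)) (add_sub_cancel _ _)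
  have hpt : lam⁻¹ • r + (1 - lam⁻¹) • (1 : ℝ) = (r + lam - 1) / lam := by
    simp only [smul_eq_mul]; field_simp; ring
  rw [hpt, smul_eq_mul, smul_eq_mul, log_one, mul_zero, add_zero] at hconc
  calc log r = lam * (lam⁻¹ * log r) := by field_simp
    _ ≤ lam * log ((r + lam - 1) / lam) := by gcongr

theorem log_sub_mul_log_le_mul_log_add_sub_log {a b x lam : ℝ} (ha : 0 < a) (hb : 0 < b)
    (hx : 0 < x) (hlam : 1 < lam) :
    log (a * (lam - 1) / b) - lam * log ((lam - 1) / (b * lam))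
      ≤ lam * log (a * x + b) - log x := by
  have hlam1 : 0 < lam - 1 := sub_pos.2 hlam
  have hr : 0 < x * (a * (lam - 1) / b) := by positivity
  have key := log_le_mul_log_add_sub_one_div hr hlam.le
  have hsum :
      (x * (a * (lam - 1) / b) + lam - 1) / lam = (a * x + b) * ((lam - 1) / (b * lam)) := by
    field_simp; ring
  rw [hsum, log_mul hx.ne' (by positivity), log_mul (by positivity) (by positivity)] at key
  linarith

theorem geom_mean_add_geom_mean_le_geom_mean_add {ι : Type*} [Fintype ι] [Nonempty ι]
    {a b : ι → ℝ} (ha : ∀ i, 0 ≤ a i) (hb : ∀ i, 0 ≤ b i) :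
    (∏ i, a i) ^ ((1 : ℝ) / Fintype.card ι) + (∏ i, b i) ^ ((1 : ℝ) / Fintype.card ι)
      ≤ (∏ i, (a i + b i)) ^ ((1 : ℝ) / Fintype.card ι) := by
  set w : ℝ := 1 / Fintype.card ι
  have hw : 0 < w := by positivity
  have hsum_w : ∑ _i : ι, w = 1 := by simp [w]
  have hab i : 0 ≤ a i + b i := add_nonneg (ha i) (hb i)
  rcases (Finset.prod_nonneg fun i _ => hab i).eq_or_lt with hzero | hpos
  · obtain ⟨i, -, hi⟩ := Finset.prod_eq_zero_iff.1 hzero.symm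
    have ha0 : a i = 0 := by linarith [ha i, hb i]
    have hb0 : b i = 0 := by linarith [ha i, hb i]
    rw [← hzero, Finset.prod_eq_zero (Finset.mem_univ i) ha0,
      Finset.prod_eq_zero (Finset.mem_univ i) hb0, zero_rpow hw.ne', add_zero]
  · have hpos_i i : 0 < a i + b i :=
      (hab i).lt_of_ne fun h => hpos.ne' (Finset.prod_eq_zero (Finset.mem_univ i) h.symm)
    have amgm {c : ι → ℝ} (hc : ∀ i, 0 ≤ c i) :
        (∏ i, c i) ^ w / (∏ i, (a i + b i)) ^ w ≤ ∑ i, w * (c i / (a i + b i)) := by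
      rw [← div_rpow (Finset.prod_nonneg fun i _ => hc i) hpos.le, ← Finset.prod_div_distrib,
        ← finsetProd_rpow _ _ fun i _ => div_nonneg (hc i) (hab i)]
      exact geom_mean_le_arith_mean_weighted _ _ _ (fun _ _ => hw.le) hsum_w
        fun i _ => div_nonneg (hc i) (hab i)
    have hone : ∑ i, w * (a i / (a i + b i)) + ∑ i, w * (b i / (a i + b i)) = 1 := by
      rw [← Finset.sum_add_distrib, ← hsum_w]
      refine Finset.sum_congr rfl fun i _ => ?_
      rw [← mul_add, ← add_div, div_self (hpos_i i).ne', mul_one]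
    have hsum := add_le_add (amgm ha) (amgm hb)
    rwa [hone, ← add_div, div_le_one (rpow_pos_of_pos hpos _)] at hsum

theorem logb_sub_mul_logb_le_mul_logb_sub_logb {β a b x y lam : ℝ} (hβ : 1 < β) (ha : 0 < a)
    (hb : 0 < b) (hx : 0 < x) (hlam : 1 < lam) (hy : a * x + b ≤ y) :
    logb β (a * (lam - 1) / b) - lam * logb β ((lam - 1) / (b * lam))
      ≤ lam * logb β y - logb β x := by
  have hmin := log_sub_mul_log_le_mul_log_add_sub_log ha hb hx hlam
  have hmono : lam * log (a * x + b) ≤ lam * log y :=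
    mul_le_mul_of_nonneg_left (log_le_log (by positivity) hy) (by linarith)
  simp only [logb, mul_div_assoc', div_sub_div_same]
  exact div_le_div_of_nonneg_right (by linarith) (log_pos hβ).le

namespace Matrix

variable {n : Type*} [Fintype n] [DecidableEq n]

theorem IsHermitian.det_one_add {M : Matrix n n ℝ} (hM : M.IsHermitian) :
    (1 + M).det = ∏ i, (1 + hM.eigenvalues i) := by
  rw [show 1 + M = cfc (fun x : ℝ => 1 + x) M by rw [cfc_add .., cfc_const_one .., cfc_id' ..],
    hM.cfc_eq]
  simp [IsHermitian.cfc, -Unitary.conjStarAlgAut_apply]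

theorem PosSemidef.one_add_det_rpow_le [Nonempty n] {M : Matrix n n ℝ} (hM : M.PosSemidef) :
    1 + M.det ^ ((1 : ℝ) / Fintype.card n) ≤ (1 + M).det ^ ((1 : ℝ) / Fintype.card n) := by
  simpa [hM.isHermitian.det_one_add, hM.isHermitian.det_eq_prod_eigenvalues] using
    geom_mean_add_geom_mean_le_geom_mean_add (fun _ => zero_le_one) hM.eigenvalues_nonneg

open scoped MatrixOrder in
theorem PosDef.det_rpow_add_det_rpow_le [Nonempty n] {A B : Matrix n n ℝ} (hA : A.PosDef)
    (hB : B.PosSemidef) :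
    A.det ^ ((1 : ℝ) / Fintype.card n) + B.det ^ ((1 : ℝ) / Fintype.card n)
      ≤ (A + B).det ^ ((1 : ℝ) / Fintype.card n) := by
  set w : ℝ := 1 / Fintype.card n
  set C := CFC.sqrt A
  have hCC : C * C = A := CFC.sqrt_mul_sqrt_self A hA.posSemidef.nonneg
  have hCh : Cᴴ = C := (CFC.sqrt_nonneg A).posSemidef.isHermitian.eq
  have hCdet : IsUnit C.det := by
    refine isUnit_iff_ne_zero.2 fun h => hA.det_pos.ne' ?_
    rw [← hCC, det_mul, h, zero_mul]
  set M := C⁻¹ * B * C⁻¹ with hM_def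
  have hM : M.PosSemidef := by
    have h := hB.conjTranspose_mul_mul_same C⁻¹
    rwa [conjTranspose_nonsing_inv, hCh] at h
  have hB_eq : B = C * M * C := by
    rw [hM_def, Matrix.mul_assoc, Matrix.mul_assoc, nonsing_inv_mul _ hCdet, Matrix.mul_one,
      ← Matrix.mul_assoc, mul_nonsing_inv _ hCdet, Matrix.one_mul]
  have hdetB : B.det = A.det * M.det := by rw [hB_eq, ← hCC]; simp only [det_mul]; ring
  have hdetAB : (A + B).det = A.det * (1 + M).det := by
    rw [hB_eq, ← hCC, show C * C + C * M * C = C * (1 + M) * C by noncomm_ring]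
    simp only [det_mul]; ring
  have hdetA : 0 ≤ A.det := hA.det_pos.le
  rw [hdetB, hdetAB, mul_rpow hdetA hM.det_nonneg,
    mul_rpow hdetA (PosSemidef.one.add hM).det_nonneg]
  calc A.det ^ w + A.det ^ w * M.det ^ w = A.det ^ w * (1 + M.det ^ w) := by ring
    _ ≤ A.det ^ w * (1 + M).det ^ w := by gcongr; exact hM.one_add_det_rpow_le

end Matrix

theorem stmt19_general (n : ℕ) (hn : 0 < n) (SX SZ : Matrix (Fin n) (Fin n) ℝ)
    (hX : SX.PosDef) (hZ : SZ.PosDef) (lam : ℝ)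
    (hlam : 1 + (SX⁻¹ * SZ).det ^ ((1:ℝ)/n) ≤ lam)
    (u t : ℝ)
    (h : (2:ℝ) ^ (-(2:ℝ)*t/n) ≥
        SX.det ^ ((1:ℝ)/n) / (SX+SZ).det ^ ((1:ℝ)/n) * (2:ℝ) ^ (-(2:ℝ)*u/n)
        + SZ.det ^ ((1:ℝ)/n) / (SX+SZ).det ^ ((1:ℝ)/n)) :
    SX.det ^ ((1:ℝ)/n) + SZ.det ^ ((1:ℝ)/n) ≤ (SX+SZ).det ^ ((1:ℝ)/n) ∧
    u - lam * t ≥ (n:ℝ)/2 *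
      (Real.logb 2 (SX.det ^ ((1:ℝ)/n) * (lam-1) / SZ.det ^ ((1:ℝ)/n))
        - lam * Real.logb 2
            ((SX+SZ).det ^ ((1:ℝ)/n) * (lam-1) / (SZ.det ^ ((1:ℝ)/n) * lam))) := by
  have : Nonempty (Fin n) := ⟨⟨0, hn⟩⟩
  have hlam1 : 1 < lam := by
    have hdet : 0 < (SX⁻¹ * SZ).det := by rw [det_mul]; exact mul_pos hX.inv.det_pos hZ.det_pos
    linarith [rpow_pos_of_pos hdet ((1:ℝ)/n)]
  refine ⟨by simpa using hX.det_rpow_add_det_rpow_le hZ.posSemidef, ?_⟩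
  set dX := SX.det ^ ((1:ℝ)/n)
  set dZ := SZ.det ^ ((1:ℝ)/n)
  set dXZ := (SX+SZ).det ^ ((1:ℝ)/n)
  have hdX : 0 < dX := rpow_pos_of_pos hX.det_pos _
  have hdZ : 0 < dZ := rpow_pos_of_pos hZ.det_pos _
  have hdXZ : 0 < dXZ := rpow_pos_of_pos (hX.add hZ).det_pos _
  have key := logb_sub_mul_logb_le_mul_logb_sub_logb one_lt_two (div_pos hdX hdXZ)
    (div_pos hdZ hdXZ) (rpow_pos_of_pos two_pos _) hlam1 h
  rw [logb_rpow two_pos (by norm_num), logb_rpow two_pos (by norm_num),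
    show dX / dXZ * (lam - 1) / (dZ / dXZ) = dX * (lam - 1) / dZ by field_simp,
    show (lam - 1) / (dZ / dXZ * lam) = dXZ * (lam - 1) / (dZ * lam) by field_simp] at key
  calc (n:ℝ) / 2 * (logb 2 (dX * (lam - 1) / dZ) - lam * logb 2 (dXZ * (lam - 1) / (dZ * lam)))
      ≤ n / 2 * (lam * (-2 * t / n) - -2 * u / n) := by gcongr
    _ = u - lam * t := by field_simp; ring

theorem stmt19 (n : ℕ) (hn : 0 < n) (SX SZ : Matrix (Fin n) (Fin n) ℝ)
    (hX : SX.PosDef) (hZ : SZ.PosDef) (lam : ℝ)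
    (hlam : 1 + (SX⁻¹ * SZ).det ^ ((1:ℝ)/n) ≤ lam)
    (u t : ℝ) (hu : 0 ≤ u) (ht : 0 ≤ t)
    (h : (2:ℝ) ^ (-(2:ℝ)*t/n) ≥
        SX.det ^ ((1:ℝ)/n) / (SX+SZ).det ^ ((1:ℝ)/n) * (2:ℝ) ^ (-(2:ℝ)*u/n)
        + SZ.det ^ ((1:ℝ)/n) / (SX+SZ).det ^ ((1:ℝ)/n)) :
    SX.det ^ ((1:ℝ)/n) + SZ.det ^ ((1:ℝ)/n) ≤ (SX+SZ).det ^ ((1:ℝ)/n) ∧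
    u - lam * t ≥ (n:ℝ)/2 *
      (Real.logb 2 (SX.det ^ ((1:ℝ)/n) * (lam-1) / SZ.det ^ ((1:ℝ)/n))
        - lam * Real.logb 2
            ((SX+SZ).det ^ ((1:ℝ)/n) * (lam-1) / (SZ.det ^ ((1:ℝ)/n) * lam))) :=
  stmt19_general n hn SX SZ hX hZ lam hlam u t h
end
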